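/- For n ≡ 0 (mod 6) and k ≡ ±1 (mod 6) with 1 ≤ k < n/2, the function f on the generalized Petersen graph GP(n,k) defined by f(u_i) = f(v_{i+3}) = ∅ if i is even, {1} if i ≡ 1 (mod 6), {2} if i ≡ 3 (mod 6), {3} if i ≡ 5 (mod 6), is a 3-rainbow dominating function of weight n (= |V|/2). -/

import Mathlib

open SimpleGraph Finset

/-- A `k`-rainbow dominating function on a graph `G`: whenever `f v = ∅`,
every color appears on some neighbor of `v`. -/
def IsKRDF {V : Type*} (G : SimpleGraph V) (k : ℕ) (f : V → Finset (Fin k)) : Prop :=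
  ∀ v, f v = ∅ → ∀ c : Fin k, ∃ u, G.Adj v u ∧ c ∈ f u

/-- The weight of a rainbow dominating function. -/
def rdfWeight {V : Type*} [Fintype V] {k : ℕ} (f : V → Finset (Fin k)) : ℕ :=
  ∑ v, (f v).card

/-- The `k`-rainbow domination number of `G`. -/
noncomputable def rainbowDomNum {V : Type*} [Fintype V] (G : SimpleGraph V) (k : ℕ) : ℕ :=
  sInf {w | ∃ f, IsKRDF G k f ∧ rdfWeight f = w}

/-- The generalized Petersen graph `GP(n,k)`: outer vertices `Sum.inl i`, inner
vertices `Sum.inr i`, with outer edges, spokes and inner edges. -/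
def GP (n k : ℕ) : SimpleGraph (ZMod n ⊕ ZMod n) where
  Adj x y := x ≠ y ∧
    (match x, y with
     | Sum.inl i, Sum.inl j => j = i + 1 ∨ i = j + 1
     | Sum.inl i, Sum.inr j => i = j
     | Sum.inr i, Sum.inl j => i = j
     | Sum.inr i, Sum.inr j => j = i + (k : ZMod n) ∨ i = j + (k : ZMod n))
  symm := by
    constructor
    rintro (i | i) (j | j) ⟨hne, h⟩ <;>
      refine ⟨hne.symm, ?_⟩ <;> simp only at h ⊢ <;> tauto
  loopless := by constructor; rintro (i | i) ⟨hne, -⟩ <;> exact hne rfl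

/-- The coloring pattern along a cycle `ZMod n`: `∅` on even positions, color `1` on
positions `≡ 1 (mod 6)`, color `2` on positions `≡ 3 (mod 6)`, color `3` on positions
`≡ 5 (mod 6)` (colors realized as `0, 1, 2 : Fin 3`). -/
def gpColor (n : ℕ) [NeZero n] (i : ZMod n) : Finset (Fin 3) :=
  if i.val % 2 = 0 then ∅
  else if i.val % 6 = 1 then {0}
  else if i.val % 6 = 3 then {1}
  else {2}

/-- The `3`-rainbow dominating function on `GP(n,k)` with `f(u_i) = f(v_{i+3})` given
by the pattern `gpColor`. -/
def gpFun (n : ℕ) [NeZero n] : (ZMod n ⊕ ZMod n) → Finset (Fin 3)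
  | Sum.inl i => gpColor n i
  | Sum.inr i => gpColor n (i - 3)

/-! Since `6 ∣ n`, the pattern `gpColor` factors through the reduction `ZMod n → ZMod 6`, and
`k` reduces to `±1` there. The three neighbours of `u_i` carry the labels of the residues
`i + 1`, `i - 1`, `i - 3`, and those of `v_i` the labels of `i`, `i + k - 3`, `i - k - 3`; that an
empty vertex sees all three colours is thus a finite check on `ZMod 6`. The inner edges are genuine
edges because `n ∣ k` would force `6 ∣ k`. Exactly the odd positions carry one colour, so each
of the two cycles contributes `n / 2` to the weight. -/

namespace GP

variable {n k : ℕ}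

theorem adj_inl_add_one [Fact (1 < n)] (i : ZMod n) :
    (GP n k).Adj (.inl i) (.inl (i + 1)) :=
  ⟨by simp, Or.inl rfl⟩

theorem adj_inl_sub_one [Fact (1 < n)] (i : ZMod n) :
    (GP n k).Adj (.inl i) (.inl (i - 1)) := by
  simpa only [sub_add_cancel] using (adj_inl_add_one (n := n) (k := k) (i - 1)).symm

theorem adj_inl_inr (i : ZMod n) : (GP n k).Adj (.inl i) (.inr i) :=
  ⟨by simp, rfl⟩

theorem adj_inr_add (hk : (k : ZMod n) ≠ 0) (i : ZMod n) :
    (GP n k).Adj (.inr i) (.inr (i + k)) :=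
  ⟨by simpa using hk, Or.inl rfl⟩

theorem adj_inr_sub (hk : (k : ZMod n) ≠ 0) (i : ZMod n) :
    (GP n k).Adj (.inr i) (.inr (i - k)) := by
  simpa only [sub_add_cancel] using (adj_inr_add hk (i - k)).symm

end GP

def gpColor6 (a : ZMod 6) : Finset (Fin 3) :=
  if a = 1 then {0} else if a = 3 then {1} else if a = 5 then {2} else ∅

theorem gpColor6_rainbow_outer :
    ∀ a : ZMod 6, gpColor6 a = ∅ →
      ∀ c, c ∈ gpColor6 (a + 1) ∨ c ∈ gpColor6 (a - 1) ∨ c ∈ gpColor6 (a - 3) := by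
  decide

theorem gpColor6_rainbow_inner :
    ∀ s : ZMod 6, s = 1 ∨ s = 5 → ∀ a : ZMod 6, gpColor6 (a - 3) = ∅ →
      ∀ c, c ∈ gpColor6 a ∨ c ∈ gpColor6 (a + s - 3) ∨ c ∈ gpColor6 (a - s - 3) := by
  decide

section

variable {n : ℕ} [NeZero n]

theorem gpColor_eq_gpColor6 (hn : 6 ∣ n) (i : ZMod n) :
    gpColor n i = gpColor6 (ZMod.castHom hn (ZMod 6) i) := by
  rw [ZMod.castHom_apply, ← ZMod.natCast_val, ← ZMod.natCast_mod, gpColor,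
    ← Nat.mod_mod_of_dvd i.val (by norm_num : 2 ∣ 6)]
  have h6 : i.val % 6 < 6 := Nat.mod_lt _ (by norm_num)
  generalize i.val % 6 = m at h6 ⊢
  interval_cases m <;> decide

theorem isKRDF_gpFun {k : ℕ} (hn : 6 ∣ n) (hk : (k : ZMod 6) = 1 ∨ (k : ZMod 6) = 5) :
    IsKRDF (GP n k) 3 (gpFun n) := by
  have : Fact (1 < n) := ⟨by have := Nat.le_of_dvd (Nat.pos_of_neZero n) hn; omega⟩
  set φ := ZMod.castHom hn (ZMod 6)
  have hk0 : (k : ZMod n) ≠ 0 := fun h => by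
    have := congrArg φ h
    rw [map_natCast, map_zero] at this
    rcases hk with hk | hk <;> rw [this] at hk <;> exact absurd hk (by decide)
  have hinl (i : ZMod n) : gpFun n (.inl i) = gpColor6 (φ i) := gpColor_eq_gpColor6 hn i
  have hinr (i : ZMod n) : gpFun n (.inr i) = gpColor6 (φ i - 3) := by
    rw [gpFun, gpColor_eq_gpColor6 hn, map_sub, map_ofNat]
  rintro (i | i) hv c
  · rw [hinl] at hv
    rcases gpColor6_rainbow_outer _ hv c with h | h | h
    · exact ⟨_, GP.adj_inl_add_one i, by rwa [hinl, map_add, map_one]⟩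
    · exact ⟨_, GP.adj_inl_sub_one i, by rwa [hinl, map_sub, map_one]⟩
    · exact ⟨_, GP.adj_inl_inr i, by rwa [hinr]⟩
  · rw [hinr] at hv
    rcases gpColor6_rainbow_inner _ hk _ hv c with h | h | h
    · exact ⟨_, (GP.adj_inl_inr i).symm, by rwa [hinl]⟩
    · exact ⟨_, GP.adj_inr_add hk0 i, by rwa [hinr, map_add, map_natCast]⟩
    · exact ⟨_, GP.adj_inr_sub hk0 i, by rwa [hinr, map_sub, map_natCast]⟩

theorem card_gpColor (i : ZMod n) : (gpColor n i).card = i.val % 2 := by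
  unfold gpColor
  split_ifs <;> simp_all

theorem sum_range_mod_two (m : ℕ) : ∑ j ∈ range (2 * m), j % 2 = m := by
  induction m with
  | zero => rfl
  | succ m ih =>
    rw [Nat.mul_succ, sum_range_succ, sum_range_succ, ih]
    omega

theorem sum_card_gpColor (hn : 2 ∣ n) : ∑ i : ZMod n, (gpColor n i).card = n / 2 := by
  have hval : ∑ i : ZMod n, i.val % 2 = ∑ j ∈ range n, j % 2 := by
    obtain ⟨p, rfl⟩ : ∃ p, n = p + 1 := Nat.exists_eq_succ_of_ne_zero (NeZero.ne n)
    exact Fin.sum_univ_eq_sum_range (· % 2) _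
  obtain ⟨m, rfl⟩ := hn
  simp only [card_gpColor, hval, sum_range_mod_two]
  omega

theorem rdfWeight_gpFun (hn : 2 ∣ n) : rdfWeight (gpFun n) = n := by
  have hshift : ∑ i : ZMod n, (gpColor n (i - 3)).card = ∑ i : ZMod n, (gpColor n i).card :=
    Fintype.sum_equiv (Equiv.subRight 3) _ _ fun _ => rfl
  rw [rdfWeight, Fintype.sum_sum_type]
  change ∑ i, (gpColor n i).card + ∑ i, (gpColor n (i - 3)).card = n
  rw [hshift, sum_card_gpColor hn]
  omega

end

theorem gpFun_isKRDF_general (n k : ℕ) [NeZero n] (hn : n % 6 = 0)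
    (hk : k % 6 = 1 ∨ k % 6 = 5) :
    IsKRDF (GP n k) 3 (gpFun n) ∧ rdfWeight (gpFun n) = n := by
  have hn6 : 6 ∣ n := Nat.dvd_of_mod_eq_zero hn
  have hk6 : (k : ZMod 6) = 1 ∨ (k : ZMod 6) = 5 := by
    rw [← ZMod.natCast_mod]
    rcases hk with hk | hk <;> rw [hk] <;> decide
  exact ⟨isKRDF_gpFun hn6 hk6, rdfWeight_gpFun (dvd_trans (by norm_num) hn6)⟩

/-- For `n ≡ 0 (mod 6)` and `k ≡ ±1 (mod 6)`, `1 ≤ k < n/2`, the function `gpFun` is a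
`3`-rainbow dominating function on `GP(n,k)` of weight `n = |V|/2`. -/
theorem gpFun_isKRDF (n k : ℕ) [NeZero n] (hn : n % 6 = 0)
    (hk : k % 6 = 1 ∨ k % 6 = 5) (hk1 : 1 ≤ k) (hk2 : 2 * k < n) :
    IsKRDF (GP n k) 3 (gpFun n) ∧ rdfWeight (gpFun n) = n :=
  gpFun_isKRDF_general n k hn hk
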